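/- Let N ≥ 2, ρ > 0, and let r, r' ∈ EuclideanSpace ℝ (Fin N) with r ≠ r'. Then arccos(−1 + 2ρ²‖r − r'‖²/((‖r‖² + ρ²)(‖r'‖² + ρ²))) = 2 · arctan(√(‖r‖²‖r'‖² + 2ρ²⟨r, r'⟩ + ρ⁴)/(ρ‖r − r'‖)). In particular, in dimension N = 3 the two representations of the fish-eye Green's function, involving respectively sin((ν + 1/2)·arccos(−1 + 2ρ²‖r − r'‖²/((‖r‖² + ρ²)(‖r'‖² + ρ²)))) and sin((2ν + 1)·arctan(√(‖r‖²‖r'‖² + 2ρ²⟨r, r'⟩ + ρ⁴)/(ρ‖r − r'‖))), coincide. -/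

import Mathlib

/-!
With `t = √S / (ρ ‖r - r'‖)`, where `S = ‖r‖²‖r'‖² + 2ρ²⟪r, r'⟫ + ρ⁴`, the double-angle formula
gives `cos (2 arctan t) = (1 - t²) / (1 + t²)`. Since `S = (‖r‖² + ρ²)(‖r'‖² + ρ²) - ρ²‖r - r'‖²`,
this is exactly the argument of `arccos`, and `2 arctan t ∈ [0, π)` because `t ≥ 0`.
-/

open Real
open scoped RealInnerProductSpace

theorem Real.cos_two_mul_arctan (x : ℝ) : cos (2 * arctan x) = (1 - x ^ 2) / (1 + x ^ 2) := by
  rw [cos_two_mul, cos_sq_arctan]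
  field_simp
  ring

theorem Real.arccos_one_sub_sq_div_one_add_sq {x : ℝ} (hx : 0 ≤ x) :
    arccos ((1 - x ^ 2) / (1 + x ^ 2)) = 2 * arctan x := by
  rw [← cos_two_mul_arctan, arccos_cos]
  · linarith [arctan_nonneg.2 hx]
  · linarith [arctan_lt_pi_div_two x]

theorem Real.arccos_sq_sub_div_sq_add {c s : ℝ} (hc : 0 < c) (hs : 0 ≤ s) :
    arccos ((c ^ 2 - s) / (c ^ 2 + s)) = 2 * arctan (√s / c) := by
  rw [← arccos_one_sub_sq_div_one_add_sq (by positivity), div_pow, sq_sqrt hs]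
  congr 1
  field_simp

section FishEye

variable {E : Type*} [NormedAddCommGroup E] [InnerProductSpace ℝ E]

theorem fisheye_radicand_eq (ρ : ℝ) (r r' : E) :
    ‖r‖ ^ 2 * ‖r'‖ ^ 2 + 2 * ρ ^ 2 * ⟪r, r'⟫ + ρ ^ 4
      = (‖r‖ ^ 2 + ρ ^ 2) * (‖r'‖ ^ 2 + ρ ^ 2) - ρ ^ 2 * ‖r - r'‖ ^ 2 := by
  rw [norm_sub_sq_real]
  ring

theorem fisheye_radicand_nonneg (ρ : ℝ) (r r' : E) :
    0 ≤ ‖r‖ ^ 2 * ‖r'‖ ^ 2 + 2 * ρ ^ 2 * ⟪r, r'⟫ + ρ ^ 4 := by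
  have hCS : -(‖r‖ * ‖r'‖) ≤ ⟪r, r'⟫ := neg_le_of_abs_le (abs_real_inner_le_norm r r')
  nlinarith [sq_nonneg (‖r‖ * ‖r'‖ - ρ ^ 2), sq_nonneg ρ]

end FishEye

theorem arccos_eq_two_arctan_fisheye
    {N : ℕ} (ρ : ℝ) (hρ : 0 < ρ)
    (r r' : EuclideanSpace ℝ (Fin N)) (hne : r ≠ r') :
    Real.arccos (-1 + 2 * ρ ^ 2 * ‖r - r'‖ ^ 2
        / ((‖r‖ ^ 2 + ρ ^ 2) * (‖r'‖ ^ 2 + ρ ^ 2)))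
      = 2 * Real.arctan (Real.sqrt (‖r‖ ^ 2 * ‖r'‖ ^ 2
            + 2 * ρ ^ 2 * (inner ℝ r r' : ℝ) + ρ ^ 4) / (ρ * ‖r - r'‖)) ∧
    ∀ ν : ℝ,
      Real.sin ((ν + 1 / 2) * Real.arccos (-1 + 2 * ρ ^ 2 * ‖r - r'‖ ^ 2
          / ((‖r‖ ^ 2 + ρ ^ 2) * (‖r'‖ ^ 2 + ρ ^ 2))))
        = Real.sin ((2 * ν + 1) * Real.arctan (Real.sqrt (‖r‖ ^ 2 * ‖r'‖ ^ 2
            + 2 * ρ ^ 2 * (inner ℝ r r' : ℝ) + ρ ^ 4) / (ρ * ‖r - r'‖))) := by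
  have hd : 0 < ‖r - r'‖ := norm_sub_pos_iff.2 hne
  have harg : -1 + 2 * ρ ^ 2 * ‖r - r'‖ ^ 2 / ((‖r‖ ^ 2 + ρ ^ 2) * (‖r'‖ ^ 2 + ρ ^ 2))
      = ((ρ * ‖r - r'‖) ^ 2 - (‖r‖ ^ 2 * ‖r'‖ ^ 2 + 2 * ρ ^ 2 * ⟪r, r'⟫ + ρ ^ 4))
        / ((ρ * ‖r - r'‖) ^ 2 + (‖r‖ ^ 2 * ‖r'‖ ^ 2 + 2 * ρ ^ 2 * ⟪r, r'⟫ + ρ ^ 4)) := by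
    rw [fisheye_radicand_eq]
    field_simp
    ring
  have hmain := harg ▸ arccos_sq_sub_div_sq_add (mul_pos hρ hd) (fisheye_radicand_nonneg ρ r r')
  exact ⟨hmain, fun ν => by rw [hmain]; ring_nf⟩
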